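/- Let n ∈ ℤ_{≥0}^r and 1 ≤ k, l ≤ r with k ≠ l, and assume n + e_k, n + e_l, and n are normal. Then there exists a complex number γ_n^{kl} such that Φ_{n+e_k}(z) − Φ_{n+e_l}(z) = γ_n^{kl} Φ_n(z). -/

import Mathlib

open MeasureTheory Polynomial

noncomputable section

/-- A system of measures on the unit circle: each `μ j` is a probability measure,
carried by the unit circle `∂𝔻 = {z : |z| = 1}`, with infinite support. -/
def MopucSystem {r : ℕ} (μ : Fin r → Measure ℂ) : Prop :=
  ∀ j, IsProbabilityMeasure (μ j) ∧ μ j ((Metric.sphere (0 : ℂ) 1)ᶜ) = 0 ∧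
    ∀ s : Set ℂ, s.Finite → μ j (sᶜ) ≠ 0

/-- The inner product `⟨P, Q⟩_μ = ∫ P(z)·conj (Q(z)) dμ(z)`. -/
def pip (μ : Measure ℂ) (P Q : Polynomial ℂ) : ℂ :=
  ∫ z, P.eval z * (starRingEnd ℂ) (Q.eval z) ∂μ

/-- `⟨P, z^p⟩_μ`. -/
def mip (μ : Measure ℂ) (P : Polynomial ℂ) (p : ℕ) : ℂ :=
  pip μ P (X ^ p)

/-- The moment `ν^p = ∫ z^p dμ(z)` for `p ∈ ℤ` (on the circle `z^{-m} = conj (z^m)`). -/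
def mom (μ : Measure ℂ) (p : ℤ) : ℂ :=
  ∫ z, z ^ p ∂μ

/-- The linear position of the pair `(j, q)` (with `q < n j`): `(∑_{i<j} n i) + q`.
This enumerates the pairs, in lexicographic order, by `0, 1, …, |n| − 1`. -/
def linIdx {r : ℕ} (n : Fin r → ℕ) (c : (j : Fin r) × Fin (n j)) : ℕ :=
  (∑ i ∈ Finset.univ.filter (fun i => i < c.1), n i) + (c.2 : ℕ)

/-- The moment matrix `M_n`: rows are indexed by pairs `(j, q)` with `1 ≤ j ≤ r`,
`0 ≤ q ≤ n j − 1`, columns by `p = 0, …, |n| − 1` (realized as pairs via the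
order-preserving enumeration `linIdx`), and the entry at `((j,q), p)` is `ν_j^{p−q}`. -/
def Mmat {r : ℕ} (μ : Fin r → Measure ℂ) (n : Fin r → ℕ) :
    Matrix ((j : Fin r) × Fin (n j)) ((j : Fin r) × Fin (n j)) ℂ :=
  Matrix.of fun rq c => mom (μ rq.1) ((linIdx n c : ℤ) - ((rq.2 : ℕ) : ℤ))

/-- The index `n` is normal if `det M_n ≠ 0`.  (For `n = 0` the matrix is empty and its
determinant is `1`, so `n = 0` is normal, matching the convention of the paper.) -/
def NormalIndex {r : ℕ} (μ : Fin r → Measure ℂ) (n : Fin r → ℕ) : Prop :=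
  (Mmat μ n).det ≠ 0

/-- A type II multiple orthogonal polynomial for the multi-index `n`. -/
def IsTypeII {r : ℕ} (μ : Fin r → Measure ℂ) (n : Fin r → ℕ) (P : Polynomial ℂ) : Prop :=
  P ≠ 0 ∧ P.degree ≤ ((∑ j, n j : ℕ) : WithBot ℕ) ∧
    ∀ j, ∀ p : ℕ, p < n j → mip (μ j) P p = 0

/-- A type II* multiple orthogonal polynomial for the multi-index `n`. -/
def IsTypeIIStar {r : ℕ} (μ : Fin r → Measure ℂ) (n : Fin r → ℕ) (P : Polynomial ℂ) : Prop :=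
  P ≠ 0 ∧ P.degree ≤ ((∑ j, n j : ℕ) : WithBot ℕ) ∧
    ∀ j, ∀ p : ℕ, 1 ≤ p → p ≤ n j → mip (μ j) P p = 0

/-- A type I multiple orthogonal polynomial for the multi-index `n`:
a nonzero vector of polynomials with `deg (L j) ≤ n j − 1` (so `L j = 0` when `n j = 0`),
and `∑_j ⟨L j, z^p⟩_j = 0` for `p = 0, …, |n| − 2`. -/
def IsTypeI {r : ℕ} (μ : Fin r → Measure ℂ) (n : Fin r → ℕ) (L : Fin r → Polynomial ℂ) : Prop :=
  L ≠ 0 ∧ (∀ j, (L j).degree < ((n j : ℕ) : WithBot ℕ)) ∧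
    ∀ p : ℕ, p + 2 ≤ ∑ j, n j → ∑ j, mip (μ j) (L j) p = 0

/-- A type I* multiple orthogonal polynomial for the multi-index `n`:
a nonzero vector of polynomials with `deg (L j) ≤ n j − 1`,
and `∑_j ⟨L j, z^p⟩_j = 0` for `p = 1, …, |n| − 1`. -/
def IsTypeIStar {r : ℕ} (μ : Fin r → Measure ℂ) (n : Fin r → ℕ) (L : Fin r → Polynomial ℂ) : Prop :=
  L ≠ 0 ∧ (∀ j, (L j).degree < ((n j : ℕ) : WithBot ℕ)) ∧
    ∀ p : ℕ, 1 ≤ p → p + 1 ≤ ∑ j, n j → ∑ j, mip (μ j) (L j) p = 0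

/-- `Φ_n`: the monic type II polynomial of degree exactly `|n|`. -/
def IsPhi {r : ℕ} (μ : Fin r → Measure ℂ) (n : Fin r → ℕ) (P : Polynomial ℂ) : Prop :=
  IsTypeII μ n P ∧ P.Monic ∧ P.natDegree = ∑ j, n j

/-- `Φ*_n`: the type II* polynomial with `Φ*_n(0) = 1`. -/
def IsPhiStar {r : ℕ} (μ : Fin r → Measure ℂ) (n : Fin r → ℕ) (P : Polynomial ℂ) : Prop :=
  IsTypeIIStar μ n P ∧ P.eval 0 = 1

/-- `Λ_n`: the type I vector normalized by `∑_j ⟨Λ_{n,j}, z^{|n|−1}⟩_j = 1`. -/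
def IsLambda {r : ℕ} (μ : Fin r → Measure ℂ) (n : Fin r → ℕ) (L : Fin r → Polynomial ℂ) : Prop :=
  IsTypeI μ n L ∧ ∑ j, mip (μ j) (L j) ((∑ i, n i) - 1) = 1

/-- `Λ*_n`: the type I* vector normalized by `∑_j ⟨Λ*_{n,j}, 1⟩_j = 1`. -/
def IsLambdaStar {r : ℕ} (μ : Fin r → Measure ℂ) (n : Fin r → ℕ) (L : Fin r → Polynomial ℂ) : Prop :=
  IsTypeIStar μ n L ∧ ∑ j, mip (μ j) (L j) 0 = 1

/-- The multi-index `n + e_k`. -/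
def eAdd {r : ℕ} (n : Fin r → ℕ) (k : Fin r) : Fin r → ℕ :=
  Function.update n k (n k + 1)

/-- The multi-index `n − e_k` (used only when `n k ≥ 1`). -/
def eSub {r : ℕ} (n : Fin r → ℕ) (k : Fin r) : Fin r → ℕ :=
  Function.update n k (n k - 1)


section Aux

variable {r : ℕ}

lemma ae_circle {μ : Measure ℂ} (h : μ ((Metric.sphere (0 : ℂ) 1)ᶜ) = 0) :
    ∀ᵐ z ∂μ, ‖z‖ = 1 := by
  have hae : ∀ᵐ z ∂μ, z ∈ Metric.sphere (0 : ℂ) 1 := by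
    rw [MeasureTheory.ae_iff]
    have e : {z : ℂ | ¬ z ∈ Metric.sphere (0:ℂ) 1} = (Metric.sphere (0:ℂ) 1)ᶜ := rfl
    rw [e]; exact h
  filter_upwards [hae] with z hz
  simpa [mem_sphere_zero_iff_norm] using hz

lemma integrable_zpow_circle {μ : Measure ℂ} [IsProbabilityMeasure μ]
    (h : μ ((Metric.sphere (0 : ℂ) 1)ᶜ) = 0) (m : ℤ) :
    Integrable (fun z : ℂ => z ^ m) μ := by
  refine Integrable.mono' (integrable_const 1) (measurable_id.pow_const m).aestronglyMeasurable ?_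
  filter_upwards [ae_circle h] with z hz
  rw [norm_zpow, hz, one_zpow]

lemma circle_pow_conj {z : ℂ} (hz : ‖z‖ = 1) (p q : ℕ) :
    z ^ p * (starRingEnd ℂ) (z ^ q) = z ^ ((p : ℤ) - (q : ℤ)) := by
  have hz0 : z ≠ 0 := by rintro rfl; simp at hz
  have h1 : z * (starRingEnd ℂ) z = 1 := by
    rw [Complex.mul_conj]
    norm_cast
    rw [Complex.normSq_eq_norm_sq]
    simp [hz]
  have hconj : (starRingEnd ℂ) z = z⁻¹ := (inv_eq_of_mul_eq_one_right h1).symm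
  rw [map_pow, hconj, sub_eq_add_neg, zpow_add₀ hz0, zpow_natCast, zpow_neg,
    zpow_natCast, inv_pow]

lemma mip_eq_sum {μ : Measure ℂ} [IsProbabilityMeasure μ]
    (h : μ ((Metric.sphere (0 : ℂ) 1)ᶜ) = 0) (P : Polynomial ℂ) (q N : ℕ)
    (hN : P.natDegree < N) :
    mip μ P q = ∑ p ∈ Finset.range N, P.coeff p * mom μ ((p : ℤ) - (q : ℤ)) := by
  unfold mip pip
  have hae : ∀ᵐ z ∂μ, P.eval z * (starRingEnd ℂ) ((X ^ q : Polynomial ℂ).eval z)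
      = ∑ p ∈ Finset.range N, P.coeff p * z ^ ((p : ℤ) - (q : ℤ)) := by
    filter_upwards [ae_circle h] with z hz
    rw [eval_pow, eval_X, Polynomial.eval_eq_sum_range' hN, Finset.sum_mul]
    refine Finset.sum_congr rfl fun p _ => ?_
    rw [mul_assoc, circle_pow_conj hz]
  rw [integral_congr_ae hae, integral_finset_sum]
  · refine Finset.sum_congr rfl fun p _ => ?_
    rw [integral_const_mul]; rfl
  · intro p _
    exact (integrable_zpow_circle h _).const_mul _

lemma mip_sub {μ : Measure ℂ} [IsProbabilityMeasure μ]
    (h : μ ((Metric.sphere (0 : ℂ) 1)ᶜ) = 0) (P Q : Polynomial ℂ) (q : ℕ) :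
    mip μ (P - Q) q = mip μ P q - mip μ Q q := by
  set N := max P.natDegree Q.natDegree + 1 with hNdef
  have h1 : P.natDegree < N := by omega
  have h2 : Q.natDegree < N := by omega
  have h3 : (P - Q).natDegree < N := lt_of_le_of_lt (natDegree_sub_le P Q) (by omega)
  rw [mip_eq_sum h _ q N h3, mip_eq_sum h _ q N h1, mip_eq_sum h _ q N h2,
    ← Finset.sum_sub_distrib]
  refine Finset.sum_congr rfl fun p _ => ?_
  rw [coeff_sub, sub_mul]

lemma mip_C_mul {μ : Measure ℂ} [IsProbabilityMeasure μ]
    (h : μ ((Metric.sphere (0 : ℂ) 1)ᶜ) = 0) (a : ℂ) (P : Polynomial ℂ) (q : ℕ) :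
    mip μ (C a * P) q = a * mip μ P q := by
  set N := P.natDegree + 1 with hNdef
  have h1 : P.natDegree < N := by omega
  have h2 : (C a * P).natDegree < N := lt_of_le_of_lt (natDegree_C_mul_le a P) h1
  rw [mip_eq_sum h _ q N h2, mip_eq_sum h _ q N h1, Finset.mul_sum]
  refine Finset.sum_congr rfl fun p _ => ?_
  rw [coeff_C_mul, mul_assoc]

lemma linIdx_lt (n : Fin r → ℕ) (σ : (j : Fin r) × Fin (n j)) :
    linIdx n σ < ∑ j, n j := by
  have hmem : σ.1 ∉ Finset.univ.filter (fun i => i < σ.1) := by simp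
  have h1 : (∑ i ∈ Finset.univ.filter (fun i => i < σ.1), n i) + n σ.1 ≤ ∑ j, n j := by
    rw [add_comm, ← Finset.sum_insert hmem]
    exact Finset.sum_le_sum_of_subset (Finset.subset_univ _)
  have h2 : (σ.2 : ℕ) < n σ.1 := σ.2.isLt
  unfold linIdx
  omega

lemma linIdx_lt_of_fst_lt (n : Fin r → ℕ) {σ τ : (j : Fin r) × Fin (n j)}
    (h : σ.1 < τ.1) : linIdx n σ < linIdx n τ := by
  have hmem : σ.1 ∉ Finset.univ.filter (fun i => i < σ.1) := by simp
  have hsub : insert σ.1 (Finset.univ.filter (fun i => i < σ.1))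
      ⊆ Finset.univ.filter (fun i => i < τ.1) := by
    intro i hi
    rcases Finset.mem_insert.mp hi with hi | hi
    · subst hi; simpa using h
    · simp only [Finset.mem_filter, Finset.mem_univ, true_and] at hi ⊢
      exact lt_trans hi h
  have h1 : (∑ i ∈ Finset.univ.filter (fun i => i < σ.1), n i) + n σ.1
      ≤ ∑ i ∈ Finset.univ.filter (fun i => i < τ.1), n i := by
    rw [add_comm, ← Finset.sum_insert hmem]
    exact Finset.sum_le_sum_of_subset hsub
  have h2 : (σ.2 : ℕ) < n σ.1 := σ.2.isLt
  unfold linIdx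
  omega

lemma linIdx_injective (n : Fin r → ℕ) : Function.Injective (linIdx n) := by
  intro σ τ h
  rcases lt_trichotomy σ.1 τ.1 with hlt | heq | hgt
  · exact absurd h (ne_of_lt (linIdx_lt_of_fst_lt n hlt))
  · obtain ⟨j, q⟩ := σ
    obtain ⟨j', q'⟩ := τ
    dsimp at heq
    subst heq
    unfold linIdx at h
    simp only [add_right_inj] at h
    exact congrArg (Sigma.mk j) (Fin.val_injective h)
  · exact absurd h.symm (ne_of_lt (linIdx_lt_of_fst_lt n hgt))

lemma linIdx_bijective (n : Fin r → ℕ) :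
    Function.Bijective (fun σ : (j : Fin r) × Fin (n j) =>
      (⟨linIdx n σ, linIdx_lt n σ⟩ : Fin (∑ j, n j))) := by
  rw [Fintype.bijective_iff_injective_and_card]
  constructor
  · intro σ τ h
    exact linIdx_injective n (congrArg Fin.val h)
  · simp [Fintype.card_sigma]

lemma sum_linIdx (n : Fin r → ℕ) (g : ℕ → ℂ) :
    ∑ σ : (j : Fin r) × Fin (n j), g (linIdx n σ) = ∑ p ∈ Finset.range (∑ j, n j), g p := by
  rw [← Fin.sum_univ_eq_sum_range]
  exact Fintype.sum_bijective _ (linIdx_bijective n) _ _ (fun σ => rfl)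

lemma typeII_vanish (μ : Fin r → Measure ℂ) (hμ : MopucSystem μ) (n : Fin r → ℕ)
    (hn : NormalIndex μ n) (R : Polynomial ℂ)
    (hdeg : R.degree < ((∑ j, n j : ℕ) : WithBot ℕ))
    (horth : ∀ j, ∀ p : ℕ, p < n j → mip (μ j) R p = 0) : R = 0 := by
  by_cases hR : R = 0
  · exact hR
  have hnat : R.natDegree < ∑ j, n j := (natDegree_lt_iff_degree_lt hR).mpr hdeg
  set v : (j : Fin r) × Fin (n j) → ℂ := fun σ => R.coeff (linIdx n σ) with hv
  have hmul : (Mmat μ n).mulVec v = 0 := by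
    funext σ
    haveI := (hμ σ.1).1
    have hc := (hμ σ.1).2.1
    show ∑ τ, Mmat μ n σ τ * v τ = 0
    have : ∑ τ, Mmat μ n σ τ * v τ
        = ∑ p ∈ Finset.range (∑ j, n j), mom (μ σ.1) ((p : ℤ) - ((σ.2 : ℕ) : ℤ)) * R.coeff p := by
      rw [← sum_linIdx n (fun p => mom (μ σ.1) ((p : ℤ) - ((σ.2 : ℕ) : ℤ)) * R.coeff p)]
      rfl
    rw [this, ← horth σ.1 σ.2 σ.2.isLt, mip_eq_sum hc R σ.2 _ hnat]
    exact Finset.sum_congr rfl fun p _ => mul_comm _ _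
  have hv0 : v = 0 := Matrix.eq_zero_of_mulVec_eq_zero hn hmul
  ext m
  rcases lt_or_ge m (∑ j, n j) with hm | hm
  · obtain ⟨σ, hσ⟩ := (linIdx_bijective n).2 ⟨m, hm⟩
    have h0 : R.coeff (linIdx n σ) = 0 := congrFun hv0 σ
    have hlin : linIdx n σ = m := congrArg Fin.val hσ
    rw [coeff_zero, ← hlin]
    exact h0
  · exact (coeff_eq_zero_of_degree_lt (lt_of_lt_of_le hdeg (by exact_mod_cast hm))).trans rfl

lemma sum_eAdd (n : Fin r → ℕ) (k : Fin r) : ∑ j, eAdd n k j = (∑ j, n j) + 1 := by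
  unfold eAdd
  rw [Finset.sum_update_of_mem (Finset.mem_univ k),
    ← Finset.add_sum_erase _ n (Finset.mem_univ k), Finset.sdiff_singleton_eq_erase]
  ring

lemma le_eAdd (n : Fin r → ℕ) (k j : Fin r) : n j ≤ eAdd n k j := by
  unfold eAdd
  rcases eq_or_ne j k with rfl | h
  · simp
  · rw [Function.update_of_ne h]

end Aux

/-- if `n + e_k`, `n + e_l` and `n` are normal (`k ≠ l`), then there is a
complex `γ_n^{kl}` with `Φ_{n+e_k} − Φ_{n+e_l} = γ_n^{kl} Φ_n`. -/
theorem compatibility_typeII (r : ℕ) (hr : 0 < r) (μ : Fin r → Measure ℂ)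
    (hμ : MopucSystem μ) (n : Fin r → ℕ) (k l : Fin r) (hkl : k ≠ l)
    (hk : NormalIndex μ (eAdd n k)) (hl : NormalIndex μ (eAdd n l))
    (hn : NormalIndex μ n)
    (Φ : Polynomial ℂ) (hΦ : IsPhi μ n Φ)
    (Φk : Polynomial ℂ) (hΦk : IsPhi μ (eAdd n k) Φk)
    (Φl : Polynomial ℂ) (hΦl : IsPhi μ (eAdd n l) Φl) :
    ∃ γ : ℂ, Φk - Φl = C γ * Φ := by
  obtain ⟨⟨hne, hdegΦ, horthΦ⟩, hmonΦ, hnatΦ⟩ := hΦ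
  obtain ⟨⟨hnek, hdegk, horthk⟩, hmonk, hnatk⟩ := hΦk
  obtain ⟨⟨hnel, hdegl, horthl⟩, hmonl, hnatl⟩ := hΦl
  set N := ∑ j, n j with hN
  have hNk : Φk.natDegree = N + 1 := by rw [hnatk, sum_eAdd]
  have hNl : Φl.natDegree = N + 1 := by rw [hnatl, sum_eAdd]
  set D := Φk - Φl with hD
  set γ := D.coeff N with hγ
  refine ⟨γ, ?_⟩
  set R := D - C γ * Φ with hR
  have hΦN : Φ.coeff N = 1 := by rw [← hnatΦ]; exact hmonΦ.coeff_natDegree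
  have hDdeg : ∀ m : ℕ, N < m → D.coeff m = 0 := by
    intro m hm
    rw [hD, coeff_sub]
    rcases eq_or_lt_of_le (Nat.succ_le_of_lt hm) with hm1 | hm1
    · rw [← hm1]
      have h1 : Φk.coeff (N + 1) = 1 := by rw [← hNk]; exact hmonk.coeff_natDegree
      have h2 : Φl.coeff (N + 1) = 1 := by rw [← hNl]; exact hmonl.coeff_natDegree
      rw [h1, h2, sub_self]
    · rw [coeff_eq_zero_of_natDegree_lt (by omega), coeff_eq_zero_of_natDegree_lt (by omega),
        sub_self]
  have hRdeg : R.degree < ((N : ℕ) : WithBot ℕ) := by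
    rw [degree_lt_iff_coeff_zero]
    intro m hm
    have hm' : N ≤ m := by exact_mod_cast hm
    rw [hR, coeff_sub, coeff_C_mul]
    rcases eq_or_lt_of_le hm' with hm1 | hm1
    · rw [← hm1, hΦN, mul_one, ← hγ, sub_self]
    · rw [hDdeg m hm1, coeff_eq_zero_of_natDegree_lt (by omega), mul_zero, sub_self]
  have horthR : ∀ j, ∀ p : ℕ, p < n j → mip (μ j) R p = 0 := by
    intro j p hp
    haveI := (hμ j).1
    have hc := (hμ j).2.1
    rw [hR, mip_sub hc, hD, mip_sub hc, mip_C_mul hc,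
      horthk j p (lt_of_lt_of_le hp (le_eAdd n k j)),
      horthl j p (lt_of_lt_of_le hp (le_eAdd n l j)),
      horthΦ j p hp]
    ring
  have hR0 : R = 0 := typeII_vanish μ hμ n hn R hRdeg horthR
  have := sub_eq_zero.mp hR0
  rw [hD] at this
  exact this
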